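/- Let X be an Archimedean partially ordered vector space with generating cone, and let P₁, P₂ be linear projections on X with P₁, I - P₁, P₂, I - P₂ all positive. If the ranges of P₁ and P₂ are disjoint complements of each other (P₂(X) = (P₁(X))^⊥), then P₁ + P₂ = I. -/

import Mathlib

/-- Two vectors are disjoint: the upper bounds of {x+y, -x-y} equal those of {x-y, y-x}. -/
def Disj {X : Type*} [AddCommGroup X] [PartialOrder X] (x y : X) : Prop :=
  upperBounds ({x + y, -x - y} : Set X) = upperBounds ({x - y, y - x} : Set X)


/-- The disjoint complement of a set. -/
def DisjComp {X : Type*} [AddCommGroup X] [PartialOrder X] (S : Set X) : Set X :=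
  {x | ∀ y ∈ S, Disj x y}

/-! A projection `P` with `0 ≤ P ≤ I` splits every upper bound `w` of `±(d + u)`, where `P d = 0`
and `P u = u`, into `w = (w - P w) + P w`, which bounds `±d` and `±u` separately; so
`ker P ⊆ (range P)^⊥`. Conversely, if `z ⊥ range P` and `±z ≤ w`, then disjointness of `z` from
the multiples of `P z` gives `±(z - 2n • P z) ≤ w` for every `n`, and the Archimedean property
forces `P z = 0`. Hence `(range P)^⊥ = ker P`. For `P₁` this says `range P₂ = ker P₁`; for `P₂`,
by symmetry of disjointness, `range P₁ ⊆ ker P₂`. Together these give `P₂ = I - P₁`. -/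

section AbsLe

variable {X : Type*} [AddCommGroup X] [PartialOrder X]

def AbsLe (x w : X) : Prop := x ≤ w ∧ -x ≤ w

theorem absLe_neg {x w : X} : AbsLe (-x) w ↔ AbsLe x w := by
  simp only [AbsLe, neg_neg, and_comm]

theorem mem_upperBounds_pair_neg {x w : X} : w ∈ upperBounds ({x, -x} : Set X) ↔ AbsLe x w := by
  simp [upperBounds_insert, AbsLe]

theorem disj_iff_absLe {x y : X} : Disj x y ↔ ∀ w, AbsLe (x + y) w ↔ AbsLe (x - y) w := by
  have h₁ : -x - y = -(x + y) := by abel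
  have h₂ : y - x = -(x - y) := by abel
  simp only [Disj, h₁, h₂, Set.ext_iff, mem_upperBounds_pair_neg]

theorem Disj.symm {x y : X} (h : Disj x y) : Disj y x := by
  rw [disj_iff_absLe] at h ⊢
  intro w
  rw [add_comm, ← neg_sub, absLe_neg]
  exact h w

theorem AbsLe.map {F : Type*} [FunLike F X X] [AddMonoidHomClass F X X] {f : F} (hf : Monotone f)
    {x w : X} (h : AbsLe x w) : AbsLe (f x) (f w) :=
  ⟨hf h.1, map_neg f x ▸ hf h.2⟩

variable [IsOrderedAddMonoid X]

theorem AbsLe.add {x y w v : X} (hx : AbsLe x w) (hy : AbsLe y v) : AbsLe (x + y) (w + v) :=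
  ⟨add_le_add hx.1 hy.1, neg_add x y ▸ add_le_add hx.2 hy.2⟩

theorem AbsLe.add_of_sub {d u w v : X} (hd : AbsLe d (w - v)) (hu : AbsLe u v) :
    AbsLe (d + u) w := by
  simpa using hd.add hu

theorem exists_absLe (hgen : ∀ x : X, ∃ a b : X, 0 ≤ a ∧ 0 ≤ b ∧ x = a - b) (x : X) :
    ∃ w, AbsLe x w := by
  obtain ⟨a, b, ha, hb, rfl⟩ := hgen x
  refine ⟨a + b, ?_, ?_⟩
  · rw [sub_eq_add_neg]
    exact add_le_add_right (neg_le_self hb) a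
  · rw [neg_sub, sub_eq_add_neg, add_comm a]
    exact add_le_add_right (neg_le_self ha) b

theorem eq_zero_of_forall_absLe_nsmul (harch : ∀ x y : X, (∀ n : ℕ, 0 < n → n • x ≤ y) → x ≤ 0)
    {b c : X} (h : ∀ n : ℕ, AbsLe (n • b) c) : b = 0 := by
  have hb : b ≤ 0 := harch b c fun n _ => (h n).1
  have hnb : -b ≤ 0 := harch (-b) c fun n _ => by rw [smul_neg]; exact (h n).2
  exact le_antisymm hb (neg_nonpos.mp hnb)

end AbsLe

structure IsOrderProjection {X : Type*} [AddCommGroup X] [PartialOrder X] [Module ℝ X]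
    (P : X →ₗ[ℝ] X) : Prop where
  idem : IsIdempotentElem P
  nonneg : ∀ x : X, 0 ≤ x → 0 ≤ P x
  sub_nonneg : ∀ x : X, 0 ≤ x → 0 ≤ x - P x

namespace IsOrderProjection

variable {X : Type*} [AddCommGroup X] [PartialOrder X] [Module ℝ X] {P : X →ₗ[ℝ] X}

theorem apply_apply (hP : IsOrderProjection P) (x : X) : P (P x) = P x :=
  LinearMap.congr_fun hP.idem.eq x

variable [IsOrderedAddMonoid X]

theorem monotone (hP : IsOrderProjection P) : Monotone P := fun x y hxy => by
  simpa using hP.nonneg (y - x) (_root_.sub_nonneg.mpr hxy)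

theorem monotone_id_sub (hP : IsOrderProjection P) :
    Monotone (LinearMap.id - P : X →ₗ[ℝ] X) := fun x y hxy => by
  have h := hP.sub_nonneg (y - x) (_root_.sub_nonneg.mpr hxy)
  rw [map_sub, sub_sub_sub_comm] at h
  simpa using h

theorem absLe_add_iff (hP : IsOrderProjection P) {d u w : X} (hd : P d = 0) (hu : P u = u) :
    AbsLe (d + u) w ↔ AbsLe d (w - P w) ∧ AbsLe u (P w) := by
  refine ⟨fun h => ⟨?_, ?_⟩, fun h => h.1.add_of_sub h.2⟩
  · simpa [hd, hu] using h.map hP.monotone_id_sub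
  · simpa [hd, hu] using h.map hP.monotone

theorem disj_of_apply_eq_zero (hP : IsOrderProjection P) {d u : X} (hd : P d = 0)
    (hu : P u = u) : Disj d u := by
  rw [disj_iff_absLe]
  intro w
  rw [sub_eq_add_neg, hP.absLe_add_iff hd hu, hP.absLe_add_iff hd (by rw [map_neg, hu]), absLe_neg]

theorem absLe_sub_add_two_nsmul (hP : IsOrderProjection P) {z u w : X} (hu : P u = u)
    (hdisj : Disj z u) (h : AbsLe (z - u) w) : AbsLe (z - (u + 2 • P z)) w := by
  have hadd : AbsLe (z + u) w := ((disj_iff_absLe.mp hdisj) w).mpr h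
  have hcompl : AbsLe (z - P z) (w - P w) := by
    simpa [hu] using h.map hP.monotone_id_sub
  have hproj : AbsLe (P z + u) (P w) := by
    simpa [hu] using hadd.map hP.monotone
  have hsplit : z - (u + 2 • P z) = (z - P z) + -(P z + u) := by rw [two_nsmul]; abel
  rw [hsplit]
  exact hcompl.add_of_sub (absLe_neg.mpr hproj)

theorem apply_eq_zero_of_mem_disjComp (hP : IsOrderProjection P)
    (harch : ∀ x y : X, (∀ n : ℕ, 0 < n → n • x ≤ y) → x ≤ 0)
    (hgen : ∀ x : X, ∃ a b : X, 0 ≤ a ∧ 0 ≤ b ∧ x = a - b)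
    {z : X} (hz : z ∈ DisjComp (Set.range P)) : P z = 0 := by
  obtain ⟨w, hw⟩ := exists_absLe hgen z
  have hiter : ∀ n : ℕ, AbsLe (z - n • (2 • P z)) w := by
    intro n
    induction n with
    | zero => simpa using hw
    | succ n ih =>
      have hu : P (n • (2 • P z)) = n • (2 • P z) := by simp [hP.apply_apply]
      have hdisj : Disj z (n • (2 • P z)) := hz _ ⟨_, hu⟩
      rw [succ_nsmul]
      exact hP.absLe_sub_add_two_nsmul hu hdisj ih
  have h2 : 2 • P z = 0 := eq_zero_of_forall_absLe_nsmul harch fun n => by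
    simpa [sub_eq_add_neg, add_comm] using (absLe_neg.mpr (hiter n)).add hw
  have h2' : (2 : ℝ) • P z = 0 := by rwa [two_smul, ← two_nsmul]
  exact (smul_eq_zero.mp h2').resolve_left two_ne_zero

theorem disjComp_range_eq_ker (hP : IsOrderProjection P)
    (harch : ∀ x y : X, (∀ n : ℕ, 0 < n → n • x ≤ y) → x ≤ 0)
    (hgen : ∀ x : X, ∃ a b : X, 0 ≤ a ∧ 0 ≤ b ∧ x = a - b) :
    DisjComp (Set.range P) = LinearMap.ker P := by
  ext z
  refine ⟨hP.apply_eq_zero_of_mem_disjComp harch hgen, ?_⟩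
  rintro hz _ ⟨y, rfl⟩
  exact hP.disj_of_apply_eq_zero hz (hP.apply_apply y)

end IsOrderProjection

theorem complementary_band_projections_sum_general {X : Type*} [AddCommGroup X] [PartialOrder X] [IsOrderedAddMonoid X] [Module ℝ X]
    (harch : ∀ x y : X, (∀ n : ℕ, 0 < n → n • x ≤ y) → x ≤ 0)
    (hgen : ∀ x : X, ∃ a b : X, 0 ≤ a ∧ 0 ≤ b ∧ x = a - b)
    (P₁ P₂ : X →ₗ[ℝ] X) (hP₁ : P₁ ∘ₗ P₁ = P₁) (hP₂ : P₂ ∘ₗ P₂ = P₂)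
    (hP₁pos : ∀ x : X, 0 ≤ x → 0 ≤ P₁ x) (hP₁compl : ∀ x : X, 0 ≤ x → 0 ≤ x - P₁ x)
    (hP₂pos : ∀ x : X, 0 ≤ x → 0 ≤ P₂ x) (hP₂compl : ∀ x : X, 0 ≤ x → 0 ≤ x - P₂ x)
    (hranges : Set.range P₂ = DisjComp (Set.range P₁)) :
    P₁ + P₂ = LinearMap.id := by
  have h₁ : IsOrderProjection P₁ := ⟨hP₁, hP₁pos, hP₁compl⟩
  have h₂ : IsOrderProjection P₂ := ⟨hP₂, hP₂pos, hP₂compl⟩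
  have hrange₂ : Set.range P₂ = LinearMap.ker P₁ :=
    hranges.trans (h₁.disjComp_range_eq_ker harch hgen)
  have hker₂ : Set.range P₁ ⊆ LinearMap.ker P₂ := by
    rw [← h₂.disjComp_range_eq_ker harch hgen, hranges]
    exact fun x hx y hy => (hy x hx).symm
  ext x
  have hfix : P₂ (x - P₁ x) = x - P₁ x := by
    obtain ⟨y, hy⟩ : x - P₁ x ∈ Set.range P₂ := by
      rw [hrange₂]
      simp [h₁.apply_apply]
    rw [← hy, h₂.apply_apply]
  have hzero : P₂ (P₁ x) = 0 := hker₂ ⟨x, rfl⟩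
  have hP₂x : P₂ x = x - P₁ x := by rwa [map_sub, hzero, sub_zero] at hfix
  simp [hP₂x]

theorem complementary_band_projections_sum {X : Type*} [AddCommGroup X] [PartialOrder X] [IsOrderedAddMonoid X] [Module ℝ X]
    [PosSMulStrictMono ℝ X] [PosSMulReflectLT ℝ X]
    (harch : ∀ x y : X, (∀ n : ℕ, 0 < n → n • x ≤ y) → x ≤ 0)
    (hgen : ∀ x : X, ∃ a b : X, 0 ≤ a ∧ 0 ≤ b ∧ x = a - b)
    (P₁ P₂ : X →ₗ[ℝ] X) (hP₁ : P₁ ∘ₗ P₁ = P₁) (hP₂ : P₂ ∘ₗ P₂ = P₂)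
    (hP₁pos : ∀ x : X, 0 ≤ x → 0 ≤ P₁ x) (hP₁compl : ∀ x : X, 0 ≤ x → 0 ≤ x - P₁ x)
    (hP₂pos : ∀ x : X, 0 ≤ x → 0 ≤ P₂ x) (hP₂compl : ∀ x : X, 0 ≤ x → 0 ≤ x - P₂ x)
    (hranges : Set.range P₂ = DisjComp (Set.range P₁)) :
    P₁ + P₂ = LinearMap.id :=
  complementary_band_projections_sum_general harch hgen P₁ P₂ hP₁ hP₂ hP₁pos hP₁compl hP₂pos
    hP₂compl hranges
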